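/- For any finite simple graphs G1, G2, ..., Gk (on pairwise disjoint vertex sets, k ≥ 1), the inductive dimension of their iterated join satisfies dim(G1 + G2 + ... + Gk) = (k - 1) + dim G1 + dim G2 + ... + dim Gk. -/

import Mathlib

open Classical in
/-- The Knill inductive dimension of the subgraph of `G` induced on the
finite vertex set `A`: the empty graph has dimension `-1`, and otherwise
`dim = (1/|A|) · Σ_{v ∈ A} (1 + dim S(v))`, where the sphere `S(v)` is the
induced subgraph on the neighbors of `v` inside `A`. -/
noncomputable def gdim {V : Type*} (G : SimpleGraph V) (A : Finset V) : ℚ :=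
  if A.card = 0 then -1
  else (A.card : ℚ)⁻¹ *
    ∑ v ∈ A.attach, (1 + gdim G (A.filter (fun u => G.Adj v.1 u)))
termination_by A.card
decreasing_by
  apply Finset.card_lt_card
  refine ⟨Finset.filter_subset _ _, fun hsub => ?_⟩
  have hv := hsub v.2
  rw [Finset.mem_filter] at hv
  exact G.loopless.irrefl v.1 hv.2


lemma gdim_empty {V : Type*} (G : SimpleGraph V) : gdim G ∅ = -1 := by
  rw [gdim]; simp

open Classical in
lemma gdim_eq {V : Type*} (G : SimpleGraph V) (A : Finset V) (hA : A.Nonempty) :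
    gdim G A = (A.card : ℚ)⁻¹ *
      ∑ v ∈ A, (1 + gdim G (A.filter (fun u => G.Adj v u))) := by
  rw [gdim, if_neg (by simpa using hA.card_ne_zero)]
  congr 1
  exact Finset.sum_attach A (fun v => (1 : ℚ) + gdim G (A.filter (fun u => G.Adj v u)))

open Classical in
lemma gdim_union {V : Type*} [DecidableEq V] (G : SimpleGraph V) :
    ∀ n (A B : Finset V), (A ∪ B).card ≤ n →
    Disjoint A B → (∀ a ∈ A, ∀ b ∈ B, G.Adj a b) →
    gdim G (A ∪ B) = 1 + gdim G A + gdim G B := by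
  intro n
  induction n with
  | zero =>
    intro A B hc _ _
    have : A ∪ B = ∅ := Finset.card_eq_zero.mp (Nat.le_zero.mp hc)
    have hA : A = ∅ := by
      rw [Finset.union_eq_empty] at this; exact this.1
    have hB : B = ∅ := by
      rw [Finset.union_eq_empty] at this; exact this.2
    simp [hA, hB, gdim_empty]
  | succ n ih =>
    intro A B hc hdisj hcross
    rcases A.eq_empty_or_nonempty with hA | hA
    · simp [hA, gdim_empty]
    rcases B.eq_empty_or_nonempty with hB | hB
    · simp [hB, gdim_empty]
    have hABne : (A ∪ B).Nonempty := hA.mono Finset.subset_union_left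
    -- key: filtering
    have hfA : ∀ v ∈ A, (A ∪ B).filter (fun u => G.Adj v u)
        = (A.filter (fun u => G.Adj v u)) ∪ B := by
      intro v hv
      ext u
      simp only [Finset.mem_filter, Finset.mem_union]
      constructor
      · rintro ⟨h1 | h1, h2⟩
        · exact Or.inl ⟨h1, h2⟩
        · exact Or.inr h1
      · rintro (⟨h1, h2⟩ | h1)
        · exact ⟨Or.inl h1, h2⟩
        · exact ⟨Or.inr h1, hcross v hv u h1⟩
    have hfB : ∀ v ∈ B, (A ∪ B).filter (fun u => G.Adj v u)
        = A ∪ (B.filter (fun u => G.Adj v u)) := by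
      intro v hv
      ext u
      simp only [Finset.mem_filter, Finset.mem_union]
      constructor
      · rintro ⟨h1 | h1, h2⟩
        · exact Or.inl h1
        · exact Or.inr ⟨h1, h2⟩
      · rintro (h1 | ⟨h1, h2⟩)
        · exact ⟨Or.inl h1, (hcross u h1 v hv).symm⟩
        · exact ⟨Or.inr h1, h2⟩
    have hcard : ∀ v ∈ A ∪ B, ((A ∪ B).filter (fun u => G.Adj v u)).card ≤ n := by
      intro v hv
      have hsub : (A ∪ B).filter (fun u => G.Adj v u) ⊆ (A ∪ B).erase v := by
        intro u hu
        rw [Finset.mem_filter] at hu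
        refine Finset.mem_erase.mpr ⟨?_, hu.1⟩
        rintro rfl
        exact G.loopless.irrefl _ hu.2
      calc ((A ∪ B).filter (fun u => G.Adj v u)).card
          ≤ ((A ∪ B).erase v).card := Finset.card_le_card hsub
        _ = (A ∪ B).card - 1 := Finset.card_erase_of_mem hv
        _ ≤ n := by omega
    -- per-vertex values
    have hvalA : ∀ v ∈ A, (1 : ℚ) + gdim G ((A ∪ B).filter (fun u => G.Adj v u))
        = (1 + gdim G (A.filter (fun u => G.Adj v u))) + (1 + gdim G B) := by
      intro v hv
      rw [hfA v hv, ih _ _ (by rw [← hfA v hv]; exact hcard v (Finset.mem_union_left _ hv))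
        (hdisj.mono_left (Finset.filter_subset _ _))
        (fun a ha b hb => hcross a (Finset.filter_subset _ _ ha) b hb)]
      ring
    have hvalB : ∀ v ∈ B, (1 : ℚ) + gdim G ((A ∪ B).filter (fun u => G.Adj v u))
        = (1 + gdim G (B.filter (fun u => G.Adj v u))) + (1 + gdim G A) := by
      intro v hv
      rw [hfB v hv, ih _ _ (by rw [← hfB v hv]; exact hcard v (Finset.mem_union_right _ hv))
        (hdisj.mono_right (Finset.filter_subset _ _))
        (fun a ha b hb => hcross a ha b (Finset.filter_subset _ _ hb))]
      ring
    have hSA : ∑ v ∈ A, ((1 : ℚ) + gdim G (A.filter (fun u => G.Adj v u)))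
        = A.card * gdim G A := by
      rw [gdim_eq G A hA]
      field_simp
    have hSB : ∑ v ∈ B, ((1 : ℚ) + gdim G (B.filter (fun u => G.Adj v u)))
        = B.card * gdim G B := by
      rw [gdim_eq G B hB]
      field_simp
    have SA : ∑ v ∈ A, ((1:ℚ) + gdim G ((A ∪ B).filter (fun u => G.Adj v u)))
        = A.card * gdim G A + A.card * (1 + gdim G B) := by
      rw [Finset.sum_congr rfl hvalA, Finset.sum_add_distrib, hSA,
        Finset.sum_const, nsmul_eq_mul]
    have SB : ∑ v ∈ B, ((1:ℚ) + gdim G ((A ∪ B).filter (fun u => G.Adj v u)))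
        = B.card * gdim G B + B.card * (1 + gdim G A) := by
      rw [Finset.sum_congr rfl hvalB, Finset.sum_add_distrib, hSB,
        Finset.sum_const, nsmul_eq_mul]
    rw [gdim_eq G (A ∪ B) hABne, Finset.sum_union hdisj, SA, SB]
    have hcardU : ((A ∪ B).card : ℚ) = A.card + B.card := by
      rw [Finset.card_union_of_disjoint hdisj]; push_cast; ring
    have hne : ((A ∪ B).card : ℚ) ≠ 0 := by
      simpa using hABne.card_ne_zero
    rw [hcardU] at hne ⊢
    field_simp
    ring

/-- For finite simple graphs `G1, …, Gk` on pairwise disjoint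
vertex sets (k ≥ 1) — realized as the induced subgraphs of an ambient graph
`G` on pairwise disjoint finite vertex sets `P 0, …, P (k-1)` in which any
two vertices from distinct parts are adjacent (so the induced subgraph on the
union of the parts is exactly the iterated join `G1 + ⋯ + Gk`) — we have
`dim (G1 + ⋯ + Gk) = (k - 1) + dim G1 + ⋯ + dim Gk`. -/
theorem dim_iterated_join {V : Type*} [DecidableEq V] (G : SimpleGraph V)
    (k : ℕ) (hk : 1 ≤ k) (P : Fin k → Finset V)
    (hdisj : ∀ i j, i ≠ j → Disjoint (P i) (P j))
    (hjoin : ∀ i j, i ≠ j → ∀ a ∈ P i, ∀ b ∈ P j, G.Adj a b) :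
    gdim G (Finset.univ.biUnion P) =
      ((k : ℚ) - 1) + ∑ i : Fin k, gdim G (P i) := by
  induction k with
  | zero => omega
  | succ m ih =>
    rcases Nat.eq_zero_or_pos m with hm | hm
    · subst hm
      have : (Finset.univ : Finset (Fin 1)).biUnion P = P 0 := by
        ext x; simp [Fin.fin_one_eq_zero]
      rw [this]
      simp
    · have hsplit : (Finset.univ : Finset (Fin (m+1))).biUnion P
          = (Finset.univ.biUnion (fun i : Fin m => P i.castSucc)) ∪ P (Fin.last m) := by
        ext x
        simp only [Finset.mem_biUnion, Finset.mem_univ, true_and, Finset.mem_union]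
        constructor
        · rintro ⟨i, hi⟩
          induction i using Fin.lastCases with
          | last => exact Or.inr hi
          | cast j => exact Or.inl ⟨j, hi⟩
        · rintro (⟨j, hj⟩ | h)
          · exact ⟨j.castSucc, hj⟩
          · exact ⟨Fin.last m, h⟩
      have hdisjAB : Disjoint (Finset.univ.biUnion (fun i : Fin m => P i.castSucc))
          (P (Fin.last m)) := by
        rw [Finset.disjoint_biUnion_left]
        intro i _
        exact hdisj _ _ (by simp [Fin.ext_iff]; omega)
      have hcrossAB : ∀ a ∈ Finset.univ.biUnion (fun i : Fin m => P i.castSucc),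
          ∀ b ∈ P (Fin.last m), G.Adj a b := by
        intro a ha b hb
        rw [Finset.mem_biUnion] at ha
        obtain ⟨i, _, hi⟩ := ha
        exact hjoin _ _ (by simp [Fin.ext_iff]; omega) a hi b hb
      rw [hsplit, gdim_union G ((Finset.univ.biUnion (fun i : Fin m => P i.castSucc))
        ∪ P (Fin.last m)).card _ _ le_rfl hdisjAB hcrossAB,
        ih hm (fun i => P i.castSucc)
          (fun i j hij => hdisj _ _ (by simpa [Fin.ext_iff] using Fin.val_ne_of_ne hij))
          (fun i j hij => hjoin _ _ (by simpa [Fin.ext_iff] using Fin.val_ne_of_ne hij)),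
        Fin.sum_univ_castSucc (fun i => gdim G (P i))]
      push_cast
      ring
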